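/- Under the SGD setup with f τ-weakly-quasi-convex, if η_k ≤ τ/(2L) then the expected squared distance to the minimizer satisfies the one-step bound E[½‖x_{k+1} − x⋆‖²] − E[½‖x_k − x⋆‖²] ≤ −(τ η_k / 2) · E[f(x_k) − f(x⋆)] + η_k² d σ⋆² / (2 b_k). -/

import Mathlib

/-!
Expanding the square, `½‖x_{k+1} − x⋆‖² = ½‖x_k − x⋆‖² − η⟪x_k − x⋆, 𝒢_k⟫ + ½η²‖𝒢_k‖²`.
Since `x_k − x⋆` and `∇f(x_k)` are `F_k`-measurable and the noise `𝒢_k − ∇f(x_k)` has zero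
conditional mean, it is orthogonal to both in `L²`: the cross term has the same expectation as
`⟪x_k − x⋆, ∇f(x_k)⟫ ≥ τ (f(x_k) − f⋆)`, and `E‖𝒢_k‖² = E‖∇f(x_k)‖² + E‖𝒢_k − ∇f(x_k)‖²`.
The descent lemma for `L`-smooth functions gives `‖∇f‖² ≤ 2L (f − f⋆)`, and `ηL ≤ τ/2` lets
half of the weak-quasi-convexity gain absorb this term.
-/

open MeasureTheory Filter
open scoped RealInnerProductSpace

section Smooth

variable {E : Type*} [NormedAddCommGroup E] [InnerProductSpace ℝ E] [CompleteSpace E]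
  {f : E → ℝ} {L : ℝ}

theorem IsLocalMin.gradient_eq_zero {a : E} (h : IsLocalMin f a) : gradient f a = 0 := by
  rw [gradient, h.fderiv_eq_zero, map_zero]

theorem ContDiff.continuous_gradient (hf : ContDiff ℝ 1 f) : Continuous (gradient f) :=
  (InnerProductSpace.toDual ℝ E).symm.continuous.comp (hf.continuous_fderiv one_ne_zero)

theorem le_add_inner_gradient_add_sq_of_lipschitz_gradient (hf : Differentiable ℝ f)
    (hL : ∀ x y, ‖gradient f x - gradient f y‖ ≤ L * ‖x - y‖) (x y : E) :
    f y ≤ f x + ⟪gradient f x, y - x⟫ + L / 2 * ‖y - x‖ ^ 2 := by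
  set v := y - x
  let φ : ℝ → ℝ := fun t => f (x + t • v) - t * ⟪gradient f x, v⟫ - L / 2 * t ^ 2 * ‖v‖ ^ 2
  have hφ : ∀ t, HasDerivAt φ
      (⟪gradient f (x + t • v), v⟫ - ⟪gradient f x, v⟫ - L * t * ‖v‖ ^ 2) t := by
    intro t
    have hline : HasDerivAt (fun t : ℝ => x + t • v) v t := by
      simpa using ((hasDerivAt_id t).smul_const v).const_add x
    have hfline := (hf (x + t • v)).hasGradientAt.hasFDerivAt.comp_hasDerivAt t hline
    rw [InnerProductSpace.toDual_apply_apply] at hfline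
    refine ((hfline.sub ((hasDerivAt_id t).mul_const _)).sub
      (((hasDerivAt_pow 2 t).const_mul (L / 2)).mul_const (‖v‖ ^ 2))).congr_deriv ?_
    ring
  have hφ' : ∀ t, 0 ≤ t →
      ⟪gradient f (x + t • v), v⟫ - ⟪gradient f x, v⟫ - L * t * ‖v‖ ^ 2 ≤ 0 := by
    intro t ht
    calc ⟪gradient f (x + t • v), v⟫ - ⟪gradient f x, v⟫ - L * t * ‖v‖ ^ 2
        = ⟪gradient f (x + t • v) - gradient f x, v⟫ - L * t * ‖v‖ ^ 2 := by
          rw [inner_sub_left]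
      _ ≤ ‖gradient f (x + t • v) - gradient f x‖ * ‖v‖ - L * t * ‖v‖ ^ 2 := by
          gcongr; exact real_inner_le_norm _ _
      _ ≤ L * ‖x + t • v - x‖ * ‖v‖ - L * t * ‖v‖ ^ 2 := by
          gcongr; exact hL _ _
      _ = 0 := by
          rw [add_sub_cancel_left, norm_smul, Real.norm_of_nonneg ht]; ring
  have hanti : AntitoneOn φ (Set.Ici 0) :=
    antitoneOn_of_deriv_nonpos (convex_Ici 0)
      (fun t _ => (hφ t).continuousAt.continuousWithinAt)
      (fun t _ => (hφ t).differentiableAt.differentiableWithinAt)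
      (fun t ht => by
        rw [interior_Ici] at ht
        rw [(hφ t).deriv]
        exact hφ' t (le_of_lt ht))
  have hφ01 : φ 1 ≤ φ 0 := hanti (Set.mem_Ici.2 le_rfl) (Set.mem_Ici.2 zero_le_one) zero_le_one
  simp only [φ, v, one_smul, zero_smul, add_zero, add_sub_cancel, one_mul, one_pow, mul_one,
    zero_mul, sub_zero, ne_eq, OfNat.ofNat_ne_zero, not_false_eq_true, zero_pow, mul_zero] at hφ01
  linarith

theorem norm_gradient_sq_le_of_lipschitz_gradient (hf : Differentiable ℝ f)
    (hL : ∀ x y, ‖gradient f x - gradient f y‖ ≤ L * ‖x - y‖) (hL0 : 0 < L)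
    {xstar : E} (hmin : ∀ x, f xstar ≤ f x) (z : E) :
    ‖gradient f z‖ ^ 2 ≤ 2 * L * (f z - f xstar) := by
  have hdesc := le_add_inner_gradient_add_sq_of_lipschitz_gradient hf hL z
    (z - L⁻¹ • gradient f z)
  rw [sub_sub_cancel_left, inner_neg_right, real_inner_smul_right, norm_neg, norm_smul,
    real_inner_self_eq_norm_sq, Real.norm_of_nonneg (inv_nonneg.2 hL0.le)] at hdesc
  have := hmin (z - L⁻¹ • gradient f z)
  have key : f xstar ≤ f z - (2 * L)⁻¹ * ‖gradient f z‖ ^ 2 := by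
    calc f xstar ≤ _ := this.trans hdesc
      _ = _ := by field_simp; ring
  exact (inv_mul_le_iff₀ (by positivity)).1 (by linarith)

theorem integrable_comp_sub_min_of_lipschitz_gradient {Ω : Type*} {m0 : MeasurableSpace Ω}
    {μ : Measure Ω} [IsFiniteMeasure μ] (hf : Differentiable ℝ f)
    (hL : ∀ x y, ‖gradient f x - gradient f y‖ ≤ L * ‖x - y‖)
    {xstar : E} (hmin : ∀ x, f xstar ≤ f x) {X : Ω → E} (hX2 : MemLp X 2 μ) :
    Integrable (fun ω => f (X ω) - f xstar) μ := by
  have hgrad0 : gradient f xstar = 0 := IsLocalMin.gradient_eq_zero (Eventually.of_forall hmin)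
  refine Integrable.mono' (((hX2.sub (memLp_const xstar)).integrable_norm_pow' (p := 2)).const_mul
    (L / 2)) ((hf.continuous.comp_aestronglyMeasurable hX2.1).sub aestronglyMeasurable_const)
    (Eventually.of_forall fun ω => ?_)
  have hdesc := le_add_inner_gradient_add_sq_of_lipschitz_gradient hf hL xstar (X ω)
  rw [hgrad0, inner_zero_left, add_zero] at hdesc
  rw [Real.norm_of_nonneg (sub_nonneg.2 (hmin _))]
  simp only [Pi.sub_apply]
  linarith

theorem memLp_gradient_comp_of_lipschitz_gradient {Ω : Type*} {m0 : MeasurableSpace Ω}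
    {μ : Measure Ω} [IsFiniteMeasure μ] (hf : ContDiff ℝ 1 f)
    (hL : ∀ x y, ‖gradient f x - gradient f y‖ ≤ L * ‖x - y‖)
    {xstar : E} (hmin : ∀ x, f xstar ≤ f x) {X : Ω → E} (hX2 : MemLp X 2 μ) :
    MemLp (fun ω => gradient f (X ω)) 2 μ := by
  have hgrad0 : gradient f xstar = 0 := IsLocalMin.gradient_eq_zero (Eventually.of_forall hmin)
  refine (hX2.sub (memLp_const xstar)).of_le_mul (c := L)
    (hf.continuous_gradient.comp_aestronglyMeasurable hX2.1) (Eventually.of_forall fun ω => ?_)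
  simpa [hgrad0] using hL (X ω) xstar

end Smooth

section CondExp

variable {Ω E : Type*} {m m0 : MeasurableSpace Ω} {μ : Measure Ω}
  [NormedAddCommGroup E] [InnerProductSpace ℝ E]

theorem MeasureTheory.MemLp.integrable_inner {u w : Ω → E} (hu : MemLp u 2 μ) (hw : MemLp w 2 μ) :
    Integrable (fun ω => ⟪u ω, w ω⟫) μ :=
  memLp_one_iff_integrable.1 ((innerSL ℝ).memLp_of_bilin 1 hu hw)

theorem integral_half_norm_sq_sub_smul_sub [IsFiniteMeasure μ] {X G : Ω → E}
    (hX2 : MemLp X 2 μ) (hG2 : MemLp G 2 μ) (η : ℝ) (xstar : E) :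
    ∫ ω, 1 / 2 * ‖X ω - η • G ω - xstar‖ ^ 2 ∂μ =
      ∫ ω, 1 / 2 * ‖X ω - xstar‖ ^ 2 ∂μ - η * ∫ ω, ⟪X ω - xstar, G ω⟫ ∂μ
        + η ^ 2 / 2 * ∫ ω, ‖G ω‖ ^ 2 ∂μ := by
  have hu2 := hX2.sub (memLp_const xstar)
  have hexpand : ∀ ω, 1 / 2 * ‖X ω - η • G ω - xstar‖ ^ 2 =
      1 / 2 * ‖X ω - xstar‖ ^ 2 - η * ⟪X ω - xstar, G ω⟫ + η ^ 2 / 2 * ‖G ω‖ ^ 2 := by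
    intro ω
    rw [sub_right_comm, norm_sub_sq_real, real_inner_smul_right, norm_smul, mul_pow,
      Real.norm_eq_abs, sq_abs]
    ring
  have hsq : Integrable (fun ω => 1 / 2 * ‖X ω - xstar‖ ^ 2) μ :=
    (hu2.integrable_norm_pow' (p := 2)).const_mul _
  have hinner : Integrable (fun ω => η * ⟪X ω - xstar, G ω⟫) μ :=
    (hu2.integrable_inner hG2).const_mul _
  have hdiff : Integrable (fun ω => 1 / 2 * ‖X ω - xstar‖ ^ 2 - η * ⟪X ω - xstar, G ω⟫) μ :=
    hsq.sub hinner
  simp_rw [hexpand]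
  rw [integral_add hdiff ((hG2.integrable_norm_pow' (p := 2)).const_mul _),
    integral_sub hsq hinner]
  simp only [integral_const_mul]

theorem integral_le_of_ae_condExp_le [IsProbabilityMeasure μ] (hm : m ≤ m0) {F : Ω → ℝ} {C : ℝ}
    (hF : ∀ᵐ ω ∂μ, (μ[F | m]) ω ≤ C) :
    ∫ ω, F ω ∂μ ≤ C := by
  rw [← integral_condExp hm]
  simpa using integral_mono_ae integrable_condExp (integrable_const C) hF

variable [CompleteSpace E]

theorem integral_inner_eq_zero_of_condExp_eq_zero (hm : m ≤ m0) [SigmaFinite (μ.trim hm)]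
    {v Y : Ω → E} (hv : StronglyMeasurable[m] v) (hvY : Integrable (fun ω => ⟪v ω, Y ω⟫) μ)
    (hY : Integrable Y μ) (hY0 : μ[Y | m] =ᵐ[μ] 0) :
    ∫ ω, ⟪v ω, Y ω⟫ ∂μ = 0 := by
  rw [← integral_condExp hm]
  have hpull := condExp_bilin_of_stronglyMeasurable_left (innerSL ℝ) hv hvY hY
  refine (integral_congr_ae (hpull.trans ?_)).trans (integral_zero Ω ℝ)
  filter_upwards [hY0] with ω hω
  simp [hω]

theorem condExp_sub_ae_eq_zero (hm : m ≤ m0) [SigmaFinite (μ.trim hm)] {G g : Ω → E}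
    (hg : StronglyMeasurable[m] g) (hGi : Integrable G μ) (hgi : Integrable g μ)
    (hGg : μ[G | m] =ᵐ[μ] g) :
    μ[G - g | m] =ᵐ[μ] 0 := by
  filter_upwards [condExp_sub hGi hgi m, hGg] with ω hsub hω
  rw [hsub, Pi.sub_apply, hω, condExp_of_stronglyMeasurable hm hg hgi, Pi.zero_apply, sub_self]

variable [IsFiniteMeasure μ] (hm : m ≤ m0) {G g : Ω → E} (hg : StronglyMeasurable[m] g)
  (hG2 : MemLp G 2 μ) (hg2 : MemLp g 2 μ) (hGg : μ[G | m] =ᵐ[μ] g)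
include hm hg hG2 hg2 hGg

theorem integral_inner_eq_of_condExp_eq {u : Ω → E} (hu : StronglyMeasurable[m] u)
    (hu2 : MemLp u 2 μ) :
    ∫ ω, ⟪u ω, G ω⟫ ∂μ = ∫ ω, ⟪u ω, g ω⟫ ∂μ := by
  have hG_sub_g := condExp_sub_ae_eq_zero hm hg (hG2.integrable one_le_two)
    (hg2.integrable one_le_two) hGg
  have horth := integral_inner_eq_zero_of_condExp_eq_zero hm hu
    (hu2.integrable_inner (hG2.sub hg2)) ((hG2.sub hg2).integrable one_le_two) hG_sub_g
  simp only [Pi.sub_apply, inner_sub_right] at horth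
  rwa [integral_sub (hu2.integrable_inner hG2) (hu2.integrable_inner hg2), sub_eq_zero] at horth

theorem integral_norm_sq_eq_add_of_condExp_eq :
    ∫ ω, ‖G ω‖ ^ 2 ∂μ = ∫ ω, ‖g ω‖ ^ 2 ∂μ + ∫ ω, ‖G ω - g ω‖ ^ 2 ∂μ := by
  have hcross := integral_inner_eq_of_condExp_eq hm hg hG2 hg2 hGg hg hg2
  have hexpand : ∫ ω, ‖G ω - g ω‖ ^ 2 ∂μ =
      ∫ ω, (‖G ω‖ ^ 2 - 2 * ⟪g ω, G ω⟫ + ‖g ω‖ ^ 2) ∂μ := by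
    simp_rw [norm_sub_sq_real, real_inner_comm]
  have hG := hG2.integrable_norm_pow' (p := 2)
  have hg' := hg2.integrable_norm_pow' (p := 2)
  have hgG := (hg2.integrable_inner hG2).const_mul 2
  have hdiff : Integrable (fun ω => ‖G ω‖ ^ 2 - 2 * ⟪g ω, G ω⟫) μ := hG.sub hgG
  rw [hexpand, integral_add hdiff hg', integral_sub hG hgG, integral_const_mul, hcross]
  simp only [real_inner_self_eq_norm_sq]
  ring

end CondExp

theorem memLp_of_iterate_sub_smul {Ω E : Type*} {m0 : MeasurableSpace Ω} {μ : Measure Ω}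
    [IsFiniteMeasure μ] [NormedAddCommGroup E] [NormedSpace ℝ E] {p : ENNReal}
    {x G : ℕ → Ω → E} {η : ℕ → ℝ} {x0 : E} (hx0 : x 0 = fun _ => x0)
    (hupdate : ∀ k ω, x (k + 1) ω = x k ω - η k • G k ω) (hG : ∀ k, MemLp (G k) p μ) :
    ∀ k, MemLp (x k) p μ
  | 0 => hx0 ▸ memLp_const x0
  | k + 1 => by
    rw [show x (k + 1) = x k - η k • G k from funext (hupdate k)]
    exact (memLp_of_iterate_sub_smul hx0 hupdate hG k).sub ((hG k).const_smul (η k))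

theorem integral_half_norm_sq_sgd_step_sub_le {Ω E : Type*} {m m0 : MeasurableSpace Ω}
    {μ : Measure Ω} [IsProbabilityMeasure μ] (hm : m ≤ m0)
    [NormedAddCommGroup E] [InnerProductSpace ℝ E] [CompleteSpace E]
    {f : E → ℝ} {L τ η V : ℝ} (hf : ContDiff ℝ 1 f)
    (hL : ∀ x y, ‖gradient f x - gradient f y‖ ≤ L * ‖x - y‖) (hL0 : 0 < L)
    {xstar : E} (hmin : ∀ x, f xstar ≤ f x)
    (hwqc : ∀ z, τ * (f z - f xstar) ≤ ⟪gradient f z, z - xstar⟫)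
    {X G : Ω → E} (hX : StronglyMeasurable[m] X) (hX2 : MemLp X 2 μ) (hG2 : MemLp G 2 μ)
    (hGmean : μ[G | m] =ᵐ[μ] fun ω => gradient f (X ω))
    (hGvar : ∀ᵐ ω ∂μ, (μ[fun ω' => ‖G ω' - gradient f (X ω')‖ ^ 2 | m]) ω ≤ V)
    (hη0 : 0 ≤ η) (hηL : η ≤ τ / (2 * L)) :
    ∫ ω, 1 / 2 * ‖X ω - η • G ω - xstar‖ ^ 2 ∂μ - ∫ ω, 1 / 2 * ‖X ω - xstar‖ ^ 2 ∂μ ≤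
      -(τ * η / 2) * ∫ ω, (f (X ω) - f xstar) ∂μ + η ^ 2 / 2 * V := by
  have hg : StronglyMeasurable[m] fun ω => gradient f (X ω) :=
    hf.continuous_gradient.comp_stronglyMeasurable hX
  have hg2 := memLp_gradient_comp_of_lipschitz_gradient hf hL hmin hX2
  have hu : StronglyMeasurable[m] fun ω => X ω - xstar := hX.sub stronglyMeasurable_const
  have hu2 : MemLp (fun ω => X ω - xstar) 2 μ := hX2.sub (memLp_const xstar)
  have hgap := integrable_comp_sub_min_of_lipschitz_gradient (hf.differentiable one_ne_zero) hL hmin hX2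
  set F := ∫ ω, (f (X ω) - f xstar) ∂μ
  have hF0 : 0 ≤ F := integral_nonneg fun ω => sub_nonneg.2 (hmin _)
  have hfirst : τ * F ≤ ∫ ω, ⟪X ω - xstar, G ω⟫ ∂μ := by
    rw [integral_inner_eq_of_condExp_eq hm hg hG2 hg2 hGmean hu hu2, ← integral_const_mul]
    exact integral_mono (hgap.const_mul τ) (hu2.integrable_inner hg2)
      fun ω => (hwqc (X ω)).trans_eq (real_inner_comm _ _)
  have hsecond : ∫ ω, ‖G ω‖ ^ 2 ∂μ ≤ 2 * L * F + V := by
    rw [integral_norm_sq_eq_add_of_condExp_eq hm hg hG2 hg2 hGmean, ← integral_const_mul]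
    exact add_le_add
      (integral_mono (hg2.integrable_norm_pow' (p := 2)) (hgap.const_mul _) fun ω =>
        norm_gradient_sq_le_of_lipschitz_gradient (hf.differentiable one_ne_zero) hL hL0 hmin _)
      (integral_le_of_ae_condExp_le hm hGvar)
  have hηL' : η * L ≤ τ / 2 := by
    rw [le_div_iff₀ (by positivity)] at hηL
    linarith
  rw [integral_half_norm_sq_sub_smul_sub hX2 hG2]
  linarith [mul_le_mul_of_nonneg_left hfirst hη0,
    mul_le_mul_of_nonneg_left hsecond (by positivity : (0 : ℝ) ≤ η ^ 2 / 2),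
    mul_le_mul_of_nonneg_right hηL' (mul_nonneg hη0 hF0)]

theorem sgd_one_step_distance_decrease_wqc_general
    {Ω : Type*} {m0 : MeasurableSpace Ω} {μ : Measure Ω} [IsProbabilityMeasure μ]
    {d : ℕ} (f : EuclideanSpace ℝ (Fin d) → ℝ) (L : ℝ)
    (hf : ContDiff ℝ 1 f)
    (hL : ∀ x y : EuclideanSpace ℝ (Fin d), ‖gradient f x - gradient f y‖ ≤ L * ‖x - y‖)
    (xstar : EuclideanSpace ℝ (Fin d)) (hmin : ∀ x, f xstar ≤ f x)
    (τ : ℝ) (hτ : 0 < τ)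
    (hwqc : ∀ z : EuclideanSpace ℝ (Fin d), τ * (f z - f xstar) ≤ ⟪gradient f z, z - xstar⟫)
    (ℱ : Filtration ℕ m0)
    (x G : ℕ → Ω → EuclideanSpace ℝ (Fin d))
    (x0 : EuclideanSpace ℝ (Fin d)) (hx0 : x 0 = fun _ => x0)
    (hx_meas : ∀ k, Measurable[ℱ k] (x k))
    (σsq : ℝ)
    (b : ℕ → ℝ)
    (h : ℝ) (hh : 0 < h)
    (ψ : ℕ → ℝ) (hψpos : ∀ k, 0 < ψ k)
    (η : ℕ → ℝ) (hη : ∀ k, η k = h * ψ k)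
    (hupdate : ∀ k ω, x (k + 1) ω = x k ω - η k • G k ω)
    (hG2 : ∀ k, MemLp (G k) 2 μ)
    (hGmean : ∀ k, μ[G k | ℱ k] =ᵐ[μ] fun ω => gradient f (x k ω))
    (hGvar : ∀ k, ∀ᵐ ω ∂μ,
      (μ[fun ω' => ‖G k ω' - gradient f (x k ω')‖ ^ 2 | ℱ k]) ω ≤ d * σsq / b k)
    (k : ℕ) :
    η k ≤ τ / (2 * L) →
      (∫ ω, (1 / 2) * ‖x (k + 1) ω - xstar‖ ^ 2 ∂μ) - ∫ ω, (1 / 2) * ‖x k ω - xstar‖ ^ 2 ∂μ ≤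
        -(τ * η k / 2) * ∫ ω, (f (x k ω) - f xstar) ∂μ + η k ^ 2 * d * σsq / (2 * b k) := by
  intro hηL
  have hη0 : 0 < η k := hη k ▸ mul_pos hh (hψpos k)
  have hL0 : 0 < L := by
    by_contra! hL0
    have : τ / (2 * L) ≤ 0 := div_nonpos_of_nonneg_of_nonpos hτ.le (by linarith)
    linarith
  have hstep := integral_half_norm_sq_sgd_step_sub_le (ℱ.le k) hf hL hL0 hmin hwqc
    (hx_meas k).stronglyMeasurable (memLp_of_iterate_sub_smul hx0 hupdate hG2 k) (hG2 k)
    (hGmean k) (hGvar k) hη0.le hηL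
  simp_rw [hupdate k]
  convert hstep using 2
  ring

/-- **One-step decrease of the expected squared distance for mini-batch SGD
on weakly-quasi-convex functions.** If `f` is `τ`-weakly-quasi-convex and `η_k ≤ τ/(2L)`, then
`E[½‖x_{k+1} − x⋆‖²] − E[½‖x_k − x⋆‖²]
  ≤ −(τ η_k/2) E[f(x_k) − f(x⋆)] + η_k² d σ⋆²/(2 b_k)`. -/
theorem sgd_one_step_distance_decrease_wqc
    {Ω : Type*} {m0 : MeasurableSpace Ω} {μ : Measure Ω} [IsProbabilityMeasure μ]
    {d : ℕ} (f : EuclideanSpace ℝ (Fin d) → ℝ) (L : ℝ)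
    (hf : ContDiff ℝ 1 f)
    (hL : ∀ x y : EuclideanSpace ℝ (Fin d), ‖gradient f x - gradient f y‖ ≤ L * ‖x - y‖)
    (xstar : EuclideanSpace ℝ (Fin d)) (hmin : ∀ x, f xstar ≤ f x)
    (τ : ℝ) (hτ : 0 < τ)
    (hwqc : ∀ z : EuclideanSpace ℝ (Fin d), τ * (f z - f xstar) ≤ ⟪gradient f z, z - xstar⟫)
    (ℱ : Filtration ℕ m0)
    (x G : ℕ → Ω → EuclideanSpace ℝ (Fin d))
    (x0 : EuclideanSpace ℝ (Fin d)) (hx0 : x 0 = fun _ => x0)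
    (hx_meas : ∀ k, Measurable[ℱ k] (x k))
    (σsq : ℝ) (hσsq : 0 ≤ σsq)
    (b : ℕ → ℝ) (hb : ∀ k, 1 ≤ b k)
    (h : ℝ) (hh : 0 < h)
    (ψ : ℕ → ℝ) (hψpos : ∀ k, 0 < ψ k) (hψle : ∀ k, ψ k ≤ 1)
    (hψ0 : ψ 0 = 1) (hψmono : ∀ k, ψ (k + 1) ≤ ψ k)
    (η : ℕ → ℝ) (hη : ∀ k, η k = h * ψ k)
    (hupdate : ∀ k ω, x (k + 1) ω = x k ω - η k • G k ω)
    (hG2 : ∀ k, MemLp (G k) 2 μ)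
    (hGmean : ∀ k, μ[G k | ℱ k] =ᵐ[μ] fun ω => gradient f (x k ω))
    (hGvar : ∀ k, ∀ᵐ ω ∂μ,
      (μ[fun ω' => ‖G k ω' - gradient f (x k ω')‖ ^ 2 | ℱ k]) ω ≤ d * σsq / b k)
    (k : ℕ) :
    η k ≤ τ / (2 * L) →
      (∫ ω, (1 / 2) * ‖x (k + 1) ω - xstar‖ ^ 2 ∂μ) - ∫ ω, (1 / 2) * ‖x k ω - xstar‖ ^ 2 ∂μ ≤
        -(τ * η k / 2) * ∫ ω, (f (x k ω) - f xstar) ∂μ + η k ^ 2 * d * σsq / (2 * b k) :=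
  sgd_one_step_distance_decrease_wqc_general f L hf hL xstar hmin τ hτ hwqc ℱ x G x0 hx0 hx_meas σsq
    b h hh ψ hψpos η hη hupdate hG2 hGmean hGvar k
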